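/- arXiv:2002.10926 — 4 statements merged into one kernel-verified Lean document; each statement's English description precedes it below -/
import Mathlib

section
/- Sequential associativity of graph insertion: let V₁, V₂, V₃ be pairwise disjoint finite sets with distinguished elements *₁ ∈ V₁ and *₂ ∈ V₂, and let g₁, g₂, g₃ be simple graphs on V₁, V₂, V₃ respectively. Then (g₁ ∘_{*₁} g₂) ∘_{*₂} g₃ = g₁ ∘_{*₁} (g₂ ∘_{*₂} g₃), as elements of the free module on the set of simple graphs on (V₁ \ {*₁}) ∪ (V₂ \ {*₂}) ∪ V₃, where insertion is extended bilinearly to linear combinations of graphs. (This is one of the operad axioms in the theorem stating that graphs with insertion form an operad.) -/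
/-!
Common framework: a simple graph on a finite vertex set `V ⊆ α` is a finite set of
unordered pairs (`Sym2 α`) of distinct elements of `V`.  The insertion
`g₁ ∘_star g₂` is an element of the free `ℚ`-module `Finset (Sym2 α) →₀ ℚ`
on the set of edge sets.
-/

open scoped Classical

variable {α : Type*} [DecidableEq α]

/-- The finite edge set `g` is a simple graph on the vertex set `V`. -/
def IsGraphOn (V : Finset α) (g : Finset (Sym2 α)) : Prop :=
  ∀ e ∈ g, ¬ e.IsDiag ∧ ∀ v ∈ e, v ∈ V

/-- The two endpoints of an unordered pair, as a `Finset`. -/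
def sym2Finset : Sym2 α → Finset α :=
  Sym2.lift ⟨fun a b => {a, b}, by intro a b; simp [Finset.pair_comm]⟩

/-- Neighbours of `x` in the edge set `g`. -/
def nbrs (g : Finset (Sym2 α)) (x : α) : Finset α :=
  (g.biUnion sym2Finset).filter fun v => s(x, v) ∈ g

/-- Remove the vertex `x` (and all incident edges) from the edge set `g`. -/
def delG (g : Finset (Sym2 α)) (x : α) : Finset (Sym2 α) :=
  g.filter fun e => x ∉ e

/-- The edges `{v, f v}` obtained from a reconnection map `f : C → V₂`. -/
def newEdges (C V₂ : Finset α) (f : {v // v ∈ C} → {w // w ∈ V₂}) : Finset (Sym2 α) :=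
  Finset.univ.image fun v : {v // v ∈ C} => s(v.1, (f v).1)

/-- Insertion `g₁ ∘_star g₂` of a graph `g₂` on the vertex set `V₂` into a graph `g₁`:
the sum, over all maps `f` from the neighbours of `star` in `g₁` to `V₂`, of the graph
obtained by deleting `star` from `g₁`, adding `g₂`, and reconnecting along `f`. -/
noncomputable def ins (V₂ : Finset α) (star : α) (g₁ g₂ : Finset (Sym2 α)) :
    Finset (Sym2 α) →₀ ℚ :=
  ∑ f : ({v // v ∈ nbrs g₁ star} → {w // w ∈ V₂}),
    Finsupp.single (delG g₁ star ∪ g₂ ∪ newEdges (nbrs g₁ star) V₂ f) 1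

/-- Bilinear extension of the insertion to the free module on graphs. -/
noncomputable def insM (V₂ : Finset α) (star : α) (x y : Finset (Sym2 α) →₀ ℚ) :
    Finset (Sym2 α) →₀ ℚ :=
  x.sum fun g₁ c₁ => y.sum fun g₂ c₂ => (c₁ * c₂) • ins V₂ star g₁ g₂

/-!
Both sides are sums over pairs of reconnection maps. On the left, `f` sends the neighbours
`N₁` of `star₁` into `V₂` and then `h` sends the neighbours of `star₂` in the resulting graph
into `V₃`; these neighbours are `N₂ ⊔ f⁻¹(star₂)`, where `N₂` are the neighbours of `star₂` in
`g₂`. On the right, `k` sends `N₂` into `V₃` and `f'` sends `N₁` into `(V₂ \ {star₂}) ∪ V₃`.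
The bijection `(f, h) ↦ (k, f')` takes `k = h` on `N₂` and `f' = f` off the fibre
`f⁻¹(star₂)`, `f' = h` on it; disjointness of the vertex sets makes it bijective, and both
pairs produce the same graph.
-/

lemma mem_sym2Finset {a : α} {e : Sym2 α} : a ∈ sym2Finset e ↔ a ∈ e := by
  induction e using Sym2.ind with
  | _ x y => simp [sym2Finset]

lemma mem_nbrs {g : Finset (Sym2 α)} {x v : α} : v ∈ nbrs g x ↔ s(x, v) ∈ g := by
  refine ⟨fun h => (Finset.mem_filter.1 h).2, fun h => Finset.mem_filter.2 ⟨?_, h⟩⟩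
  exact Finset.mem_biUnion.2 ⟨_, h, mem_sym2Finset.2 (Sym2.mem_mk_right x v)⟩

lemma mem_delG {g : Finset (Sym2 α)} {x : α} {e : Sym2 α} : e ∈ delG g x ↔ e ∈ g ∧ x ∉ e :=
  Finset.mem_filter

lemma mem_newEdges {C V : Finset α} {f : {v // v ∈ C} → {w // w ∈ V}} {e : Sym2 α} :
    e ∈ newEdges C V f ↔ ∃ v : {v // v ∈ C}, s(v.1, (f v).1) = e := by
  simp [newEdges]

omit [DecidableEq α] in
lemma IsGraphOn.notMem_edge {V : Finset α} {g : Finset (Sym2 α)} (hg : IsGraphOn V g)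
    {x : α} (hx : x ∉ V) {e : Sym2 α} (he : e ∈ g) : x ∉ e :=
  fun hxe => hx ((hg e he).2 x hxe)

lemma IsGraphOn.mem_of_mem_nbrs {V : Finset α} {g : Finset (Sym2 α)} (hg : IsGraphOn V g)
    {x v : α} (hv : v ∈ nbrs g x) : v ∈ V :=
  (hg _ (mem_nbrs.1 hv)).2 v (Sym2.mem_mk_right x v)

lemma Finsupp.sum_sum_single_one_smul {β ι M : Type*} [AddCommMonoid M] [Module ℚ M]
    [Fintype ι] (G : ι → β) (F : β → M) :
    ((∑ i, Finsupp.single (G i) (1 : ℚ)).sum fun x c => c • F x) = ∑ i, F (G i) := by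
  rw [← Finsupp.sum_finsetSum_index (by simp) fun x c₁ c₂ => add_smul c₁ c₂ (F x)]
  simp

section Reconnection

variable {N₁ N₂ V₂ V₃ : Finset α} {s : α}
  {M : ({v // v ∈ N₁} → {w // w ∈ V₂}) → Finset α}
  (hM : ∀ f u, u ∈ M f ↔ u ∈ N₂ ∨ ∃ hv : u ∈ N₁, (f ⟨u, hv⟩).1 = s)

variable (V₃) in
def composeReconnections
    (p : Σ f : {v // v ∈ N₁} → {w // w ∈ V₂}, {u // u ∈ M f} → {w // w ∈ V₃}) :
    ({v // v ∈ N₂} → {w // w ∈ V₃}) × ({v // v ∈ N₁} → {w // w ∈ V₂.erase s ∪ V₃}) :=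
  (fun w => p.2 ⟨w, (hM p.1 w).2 (Or.inl w.2)⟩,
   fun v => if hc : (p.1 v).1 = s then
      ⟨p.2 ⟨v, (hM p.1 v).2 (Or.inr ⟨v.2, hc⟩)⟩, Finset.mem_union_right _ (p.2 _).2⟩
    else ⟨p.1 v, Finset.mem_union_left _ (Finset.mem_erase.2 ⟨hc, (p.1 v).2⟩)⟩)

omit hM in
def collapseToStar (hs : s ∈ V₂) (f' : {v // v ∈ N₁} → {w // w ∈ V₂.erase s ∪ V₃})
    (v : {v // v ∈ N₁}) : {w // w ∈ V₂} :=
  if hc : (f' v).1 ∈ V₃ then ⟨s, hs⟩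
  else ⟨f' v, Finset.mem_of_mem_erase ((Finset.mem_union.1 (f' v).2).resolve_right hc)⟩

omit hM in
lemma collapseToStar_eq_star_iff (hs : s ∈ V₂)
    (f' : {v // v ∈ N₁} → {w // w ∈ V₂.erase s ∪ V₃}) (v : {v // v ∈ N₁}) :
    (collapseToStar hs f' v).1 = s ↔ (f' v).1 ∈ V₃ := by
  by_cases hc : (f' v).1 ∈ V₃
  · simp [collapseToStar, hc]
  · simp only [collapseToStar, hc, dite_false, iff_false]
    exact (Finset.mem_erase.1 ((Finset.mem_union.1 (f' v).2).resolve_right hc)).1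

lemma collapseToStar_composeReconnections_snd (hV : Disjoint V₂ V₃) (hs : s ∈ V₂)
    (p : Σ f : {v // v ∈ N₁} → {w // w ∈ V₂}, {u // u ∈ M f} → {w // w ∈ V₃}) :
    collapseToStar hs (composeReconnections V₃ hM p).2 = p.1 := by
  funext v
  by_cases hc : (p.1 v).1 = s
  · have : (p.2 ⟨v, (hM p.1 v).2 (Or.inr ⟨v.2, hc⟩)⟩).1 ∈ V₃ := (p.2 _).2
    simp only [composeReconnections, collapseToStar, hc, dite_true, this]
    exact Subtype.ext hc.symm
  · have : (p.1 v).1 ∉ V₃ := Finset.disjoint_left.1 hV (p.1 v).2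
    simp [composeReconnections, collapseToStar, hc, this]

lemma composeReconnections_injective (hV : Disjoint V₂ V₃) (hs : s ∈ V₂) :
    Function.Injective (composeReconnections V₃ hM) := by
  rintro ⟨f, h₁⟩ ⟨f₂, h₂⟩ heq
  obtain rfl : f = f₂ := by
    have := congrArg (collapseToStar hs ∘ Prod.snd) heq
    simpa only [Function.comp_apply, collapseToStar_composeReconnections_snd hM hV hs] using this
  congr 1
  funext u
  rcases (hM f u).1 u.2 with hN | ⟨hv, hfv⟩
  · exact congrFun (congrArg Prod.fst heq) ⟨u, hN⟩
  · have := congrArg Subtype.val (congrFun (congrArg Prod.snd heq) ⟨u, hv⟩)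
    simpa [composeReconnections, hfv] using Subtype.ext this

lemma composeReconnections_surjective (hN : Disjoint N₁ N₂) (hs : s ∈ V₂) :
    Function.Surjective (composeReconnections V₃ hM) := by
  rintro ⟨k, f'⟩
  set f := collapseToStar hs f'
  have hfiber : ∀ u ∈ M f, u ∉ N₂ → ∃ hv : u ∈ N₁, (f' ⟨u, hv⟩).1 ∈ V₃ := fun u hu hu₂ =>
    (((hM f u).1 hu).resolve_left hu₂).imp fun _ => (collapseToStar_eq_star_iff hs f' _).1
  refine ⟨⟨f, fun u => if hu₂ : u.1 ∈ N₂ then k ⟨u, hu₂⟩ else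
    ⟨f' ⟨u, (hfiber u u.2 hu₂).fst⟩, (hfiber u u.2 hu₂).snd⟩⟩, ?_⟩
  refine Prod.ext (funext fun w => by simp [composeReconnections]) (funext fun v => ?_)
  by_cases hc : (f' v).1 ∈ V₃
  · have hv₂ : v.1 ∉ N₂ := Finset.disjoint_left.1 hN v.2
    have hfv : (f v).1 = s := (collapseToStar_eq_star_iff hs f' v).2 hc
    simp [composeReconnections, hfv, hv₂]
  · have hfv : (f v).1 ≠ s := mt (collapseToStar_eq_star_iff hs f' v).1 hc
    have hf : (f v).1 = (f' v).1 := by simp [f, collapseToStar, hc]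
    simpa only [composeReconnections, dif_neg hfv] using Subtype.ext hf

end Reconnection

def insertionGraph (V₂ : Finset α) (star : α) (g₁ g₂ : Finset (Sym2 α))
    (f : {v // v ∈ nbrs g₁ star} → {w // w ∈ V₂}) : Finset (Sym2 α) :=
  delG g₁ star ∪ g₂ ∪ newEdges (nbrs g₁ star) V₂ f

lemma ins_eq_sum_insertionGraph (V₂ : Finset α) (star : α) (g₁ g₂ : Finset (Sym2 α)) :
    ins V₂ star g₁ g₂ = ∑ f, Finsupp.single (insertionGraph V₂ star g₁ g₂ f) 1 :=
  rfl

section Insertion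

variable {V₁ V₂ V₃ : Finset α} {g₁ g₂ g₃ : Finset (Sym2 α)} {a b : α}

lemma mem_nbrs_insertionGraph (hg₁ : IsGraphOn V₁ g₁) (hb : b ∉ V₁)
    (f : {v // v ∈ nbrs g₁ a} → {w // w ∈ V₂}) (u : α) :
    u ∈ nbrs (insertionGraph V₂ a g₁ g₂ f) b ↔
      u ∈ nbrs g₂ b ∨ ∃ hu : u ∈ nbrs g₁ a, (f ⟨u, hu⟩).1 = b := by
  rw [mem_nbrs, mem_nbrs (g := g₂)]
  simp only [insertionGraph, Finset.mem_union, mem_newEdges, mem_delG]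
  constructor
  · rintro ((⟨h, -⟩ | h) | ⟨v, hv⟩)
    · exact absurd (Sym2.mem_mk_left b u) (hg₁.notMem_edge hb h)
    · exact Or.inl h
    · rcases Sym2.eq_iff.1 hv with ⟨rfl, -⟩ | ⟨rfl, rfl⟩
      · exact absurd (hg₁.mem_of_mem_nbrs v.2) hb
      · exact Or.inr ⟨v.2, rfl⟩
  · rintro (h | ⟨hu, hfu⟩)
    · exact Or.inl (Or.inr h)
    · exact Or.inr ⟨⟨u, hu⟩, by rw [hfu, Sym2.eq_swap]⟩

lemma insertionGraph_insertionGraph (hg₁ : IsGraphOn V₁ g₁) (hb : b ∉ V₁)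
    (p : Σ f : {v // v ∈ nbrs g₁ a} → {w // w ∈ V₂},
      {u // u ∈ nbrs (insertionGraph V₂ a g₁ g₂ f) b} → {w // w ∈ V₃}) :
    let q := composeReconnections V₃ (mem_nbrs_insertionGraph hg₁ hb) p
    insertionGraph V₃ b (insertionGraph V₂ a g₁ g₂ p.1) g₃ p.2 =
      insertionGraph (V₂.erase b ∪ V₃) a g₁ (insertionGraph V₃ b g₂ g₃ q.1) q.2 := by
  obtain ⟨f, h⟩ := p
  have hM := mem_nbrs_insertionGraph (g₂ := g₂) hg₁ hb f
  ext e
  -- unfold the outer graphs first: the domain of `p.2` is typed by the inner one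
  simp only [insertionGraph.eq_1 _ _ _ g₃, Finset.mem_union, mem_delG, mem_newEdges]
  simp only [insertionGraph, composeReconnections, Finset.mem_union, mem_delG, mem_newEdges]
  constructor
  · rintro ((⟨(h1 | h2) | ⟨v, rfl⟩, hbe⟩ | h3) | ⟨u, rfl⟩)
    · exact Or.inl (Or.inl h1)
    · exact Or.inl (Or.inr (Or.inl (Or.inl ⟨h2, hbe⟩)))
    · have hfv : (f v).1 ≠ b := fun hfv => hbe (hfv ▸ Sym2.mem_mk_right _ _)
      exact Or.inr ⟨v, by rw [dif_neg hfv]⟩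
    · exact Or.inl (Or.inr (Or.inl (Or.inr h3)))
    · rcases (hM u).1 u.2 with hu₂ | ⟨hu₁, hfu⟩
      · exact Or.inl (Or.inr (Or.inr ⟨⟨u, hu₂⟩, rfl⟩))
      · exact Or.inr ⟨⟨u, hu₁⟩, by rw [dif_pos hfu]⟩
  · rintro ((h1 | ((h2 | h3) | ⟨w, rfl⟩)) | ⟨v, rfl⟩)
    · exact Or.inl (Or.inl ⟨Or.inl (Or.inl h1), hg₁.notMem_edge hb h1.1⟩)
    · exact Or.inl (Or.inl ⟨Or.inl (Or.inr h2.1), h2.2⟩)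
    · exact Or.inl (Or.inr h3)
    · exact Or.inr ⟨⟨w, (hM w).2 (Or.inl w.2)⟩, rfl⟩
    · by_cases hfv : (f v).1 = b
      · exact Or.inr ⟨⟨v, (hM v).2 (Or.inr ⟨v.2, hfv⟩)⟩, by rw [dif_pos hfv]⟩
      · refine Or.inl (Or.inl ⟨Or.inr ⟨v, by rw [dif_neg hfv]⟩, ?_⟩)
        rw [dif_neg hfv, Sym2.mem_iff, not_or]
        exact ⟨fun hv => hb (hv ▸ hg₁.mem_of_mem_nbrs v.2), Ne.symm hfv⟩

lemma sum_ins_insertionGraph (h12 : Disjoint V₁ V₂) (h23 : Disjoint V₂ V₃) (hb : b ∈ V₂)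
    (hg₁ : IsGraphOn V₁ g₁) (hg₂ : IsGraphOn V₂ g₂) :
    ∑ f, ins V₃ b (insertionGraph V₂ a g₁ g₂ f) g₃ =
      ∑ k, ins (V₂.erase b ∪ V₃) a g₁ (insertionGraph V₃ b g₂ g₃ k) := by
  have hb₁ : b ∉ V₁ := Finset.disjoint_right.1 h12 hb
  have hN : Disjoint (nbrs g₁ a) (nbrs g₂ b) :=
    Finset.disjoint_of_subset_left (fun _ => hg₁.mem_of_mem_nbrs)
      (Finset.disjoint_of_subset_right (fun _ => hg₂.mem_of_mem_nbrs) h12)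
  have hM := mem_nbrs_insertionGraph (g₂ := g₂) (V₂ := V₂) (a := a) hg₁ hb₁
  simp only [ins_eq_sum_insertionGraph]
  rw [Finset.sum_sigma', Finset.univ_sigma_univ]
  refine (Fintype.sum_bijective (composeReconnections V₃ hM)
    ⟨composeReconnections_injective hM h23 hb, composeReconnections_surjective hM hN hb⟩ _
    (fun q => Finsupp.single
      (insertionGraph (V₂.erase b ∪ V₃) a g₁ (insertionGraph V₃ b g₂ g₃ q.1) q.2) (1 : ℚ))
    fun p => ?_).trans (Fintype.sum_prod_type _)
  rw [insertionGraph_insertionGraph hg₁ hb₁ p]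

end Insertion

lemma insM_single_single (V : Finset α) (x : α) (g g' : Finset (Sym2 α)) :
    insM V x (Finsupp.single g 1) (Finsupp.single g' 1) = ins V x g g' := by
  simp [insM]

lemma insM_ins_single (V V' : Finset α) (x x' : α) (g g' g'' : Finset (Sym2 α)) :
    insM V' x' (ins V x g g') (Finsupp.single g'' 1) =
      ∑ f, ins V' x' (insertionGraph V x g g' f) g'' := by
  have h : ∀ g₀ (c : ℚ), ((Finsupp.single g'' 1).sum fun g₂ c₂ => (c * c₂) • ins V' x' g₀ g₂) =
      c • ins V' x' g₀ g'' := fun g₀ c => by rw [Finsupp.sum_single_index (by simp), mul_one]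
  simp only [insM, h, ins_eq_sum_insertionGraph V x g g']
  exact Finsupp.sum_sum_single_one_smul _ _

lemma insM_single_ins (V V' : Finset α) (x x' : α) (g g' g'' : Finset (Sym2 α)) :
    insM V' x' (Finsupp.single g 1) (ins V x g' g'') =
      ∑ f, ins V' x' g (insertionGraph V x g' g'' f) := by
  rw [insM, Finsupp.sum_single_index (by simp), ins_eq_sum_insertionGraph V x g' g'']
  simp only [one_mul]
  exact Finsupp.sum_sum_single_one_smul _ _

theorem sequential_associativity_of_graph_insertion_general
    (V₁ V₂ V₃ : Finset α) (star₁ star₂ : α)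
    (h12 : Disjoint V₁ V₂) (h23 : Disjoint V₂ V₃)
    (hstar₂ : star₂ ∈ V₂)
    (g₁ g₂ g₃ : Finset (Sym2 α))
    (hg₁ : IsGraphOn V₁ g₁) (hg₂ : IsGraphOn V₂ g₂) :
    insM V₃ star₂ (insM V₂ star₁ (Finsupp.single g₁ 1) (Finsupp.single g₂ 1))
        (Finsupp.single g₃ 1)
      = insM (V₂.erase star₂ ∪ V₃) star₁ (Finsupp.single g₁ 1)
          (insM V₃ star₂ (Finsupp.single g₂ 1) (Finsupp.single g₃ 1)) := by
  rw [insM_single_single, insM_single_single, insM_ins_single, insM_single_ins]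
  exact sum_ins_insertionGraph h12 h23 hstar₂ hg₁ hg₂

/-- **Sequential associativity of graph insertion.** -/
theorem sequential_associativity_of_graph_insertion
    (V₁ V₂ V₃ : Finset α) (star₁ star₂ : α)
    (h12 : Disjoint V₁ V₂) (h13 : Disjoint V₁ V₃) (h23 : Disjoint V₂ V₃)
    (hstar₁ : star₁ ∈ V₁) (hstar₂ : star₂ ∈ V₂)
    (g₁ g₂ g₃ : Finset (Sym2 α))
    (hg₁ : IsGraphOn V₁ g₁) (hg₂ : IsGraphOn V₂ g₂) (hg₃ : IsGraphOn V₃ g₃) :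
    insM V₃ star₂ (insM V₂ star₁ (Finsupp.single g₁ 1) (Finsupp.single g₂ 1))
        (Finsupp.single g₃ 1)
      = insM (V₂.erase star₂ ∪ V₃) star₁ (Finsupp.single g₁ 1)
          (insM V₃ star₂ (Finsupp.single g₂ 1) (Finsupp.single g₃ 1)) :=
  sequential_associativity_of_graph_insertion_general V₁ V₂ V₃ star₁ star₂ h12 h23 hstar₂ g₁ g₂ g₃
    hg₁ hg₂
end

section
/- Graphs with too many edges cannot appear in the support of a partial composition: let g be a simple graph on a finite set V with |V| = n and with strictly more than C(n−1, 2) + 1 edges (where C(m, 2) = m(m−1)/2). Then for all disjoint finite sets V₁, V₂ with * ∈ V₁, |V₁| ≥ 2, |V₂| ≥ 2 and (V₁ \ {*}) ∪ V₂ = V, and for all simple graphs g₁ on V₁ and g₂ on V₂, the graph g does not belong to the support of g₁ ∘_* g₂. -/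
/-!
Common framework: a simple graph on a finite vertex set `V ⊆ α` is a finite set of
unordered pairs (`Sym2 α`) of distinct elements of `V`.  The insertion
`g₁ ∘_star g₂` is an element of the free `ℚ`-module `Finset (Sym2 α) →₀ ℚ`
on the set of edge sets.
-/

open scoped Classical

variable {α : Type*} [DecidableEq α]

/-!
A graph in the support of `g₁ ∘_star g₂` is the union of `g₁` with `star` deleted, a graph on
`a = |V₁| - 1` vertices, of `g₂`, a graph on `b = |V₂|` vertices, and of at most `a` reconnecting
edges. It therefore has at most `C(a, 2) + C(b, 2) + a` edges, and for `a ≥ 1`, `b ≥ 2` this is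
at most `C(a + b - 1, 2) + 1`, because `C(a + b - 1, 2) = C(a - 1, 2) + C(b, 2) + (a - 1) b`.
-/

theorem Nat.choose_two_add (x y : ℕ) :
    (x + y).choose 2 = x.choose 2 + y.choose 2 + x * y := by
  simpa [Finset.Nat.antidiagonal_succ, add_comm, add_left_comm, add_assoc] using
    Nat.add_choose_eq x y 2

theorem Nat.choose_two_add_choose_two_add_le {a b : ℕ} (ha : 1 ≤ a) (hb : 2 ≤ b) :
    a.choose 2 + b.choose 2 + a ≤ (a + b - 1).choose 2 + 1 := by
  obtain ⟨a, rfl⟩ := Nat.exists_eq_add_of_le' ha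
  obtain ⟨b, rfl⟩ := Nat.exists_eq_add_of_le' hb
  rw [show a + 1 + (b + 2) - 1 = a + (b + 2) by omega, Nat.choose_two_add a (b + 2),
    Nat.choose_two_add a 1, Nat.choose_eq_zero_of_lt one_lt_two]
  nlinarith

theorem IsGraphOn.subset_image_offDiag {W : Finset α} {g : Finset (Sym2 α)}
    (h : IsGraphOn W g) : g ⊆ W.offDiag.image Sym2.mk.uncurry := by
  intro e he
  obtain ⟨hdiag, hW⟩ := h e he
  induction e using Sym2.inductionOn with
  | hf a b =>
    refine Finset.mem_image.2 ⟨(a, b), ?_, rfl⟩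
    simpa [Finset.mem_offDiag] using ⟨hW a (by simp), hW b (by simp), hdiag⟩

theorem IsGraphOn.card_le {W : Finset α} {g : Finset (Sym2 α)} (h : IsGraphOn W g) :
    g.card ≤ W.card.choose 2 :=
  Sym2.card_image_offDiag W ▸ Finset.card_le_card h.subset_image_offDiag

theorem IsGraphOn.delG {V : Finset α} {g : Finset (Sym2 α)} (h : IsGraphOn V g) (x : α) :
    IsGraphOn (V.erase x) (delG g x) := by
  intro e he
  obtain ⟨he, hx⟩ := Finset.mem_filter.1 he
  exact ⟨(h e he).1, fun v hv => Finset.mem_erase.2 ⟨fun hvx => hx (hvx ▸ hv), (h e he).2 v hv⟩⟩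

theorem IsGraphOn.nbrs_subset_erase {V : Finset α} {g : Finset (Sym2 α)} (h : IsGraphOn V g)
    (x : α) : nbrs g x ⊆ V.erase x := by
  intro v hv
  obtain ⟨hdiag, hV⟩ := h _ (Finset.mem_filter.1 hv).2
  exact Finset.mem_erase.2 ⟨fun hvx => hdiag (by simp [hvx]), hV v (by simp)⟩

theorem card_newEdges_le (C V₂ : Finset α) (f : {v // v ∈ C} → {w // w ∈ V₂}) :
    (newEdges C V₂ f).card ≤ C.card :=
  Finset.card_image_le.trans_eq (Finset.card_univ.trans (Fintype.card_coe C))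

theorem exists_eq_of_mem_support_ins {V₂ : Finset α} {star : α} {g₁ g₂ g : Finset (Sym2 α)}
    (h : g ∈ (ins V₂ star g₁ g₂).support) :
    ∃ f, g = delG g₁ star ∪ g₂ ∪ newEdges (nbrs g₁ star) V₂ f := by
  obtain ⟨f, -, hf⟩ := Finset.mem_biUnion.1 (Finsupp.support_finsetSum h)
  exact ⟨f, Finset.mem_singleton.1 (Finsupp.support_single_subset hf)⟩

theorem card_le_of_mem_support_ins {V₁ V₂ : Finset α} {star : α} {g₁ g₂ g : Finset (Sym2 α)}
    (hg₁ : IsGraphOn V₁ g₁) (hg₂ : IsGraphOn V₂ g₂) (h : g ∈ (ins V₂ star g₁ g₂).support) :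
    g.card ≤ (V₁.erase star).card.choose 2 + V₂.card.choose 2 + (V₁.erase star).card := by
  obtain ⟨f, rfl⟩ := exists_eq_of_mem_support_ins h
  calc _ ≤ (delG g₁ star).card + g₂.card + (newEdges (nbrs g₁ star) V₂ f).card :=
        (Finset.card_union_le _ _).trans (Nat.add_le_add_right (Finset.card_union_le _ _) _)
    _ ≤ _ := by
        gcongr
        · exact (hg₁.delG star).card_le
        · exact hg₂.card_le
        · exact (card_newEdges_le _ _ f).trans (Finset.card_le_card (hg₁.nbrs_subset_erase star))

theorem too_many_edges_not_in_support_general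
    (V : Finset α) (n : ℕ) (hn : V.card = n)
    (g : Finset (Sym2 α))
    (hcard : Nat.choose (n - 1) 2 + 1 < g.card) :
    ∀ (V₁ V₂ : Finset α) (star : α), Disjoint V₁ V₂ → star ∈ V₁ →
      2 ≤ V₁.card → 2 ≤ V₂.card → V₁.erase star ∪ V₂ = V →
      ∀ g₁ g₂ : Finset (Sym2 α), IsGraphOn V₁ g₁ → IsGraphOn V₂ g₂ →
        g ∉ (ins V₂ star g₁ g₂).support := by
  intro V₁ V₂ star hdisj hstar hV₁ hV₂ hunion g₁ g₂ hg₁ hg₂ hmem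
  have hsize := card_le_of_mem_support_ins hg₁ hg₂ hmem
  have ha : 1 ≤ (V₁.erase star).card := by rw [Finset.card_erase_of_mem hstar]; omega
  have hn' : n = (V₁.erase star).card + V₂.card := by
    rw [← hn, ← hunion,
      Finset.card_union_of_disjoint (Finset.disjoint_of_subset_left (Finset.erase_subset _ _) hdisj)]
  have := Nat.choose_two_add_choose_two_add_le ha hV₂
  subst hn'
  omega

/-- **Graphs with too many edges cannot appear in the support of a partial composition**:
if a graph `g` on a set `V` of cardinality `n` has strictly more than `C(n-1, 2) + 1`
edges, then `g` is not in the support of any insertion `g₁ ∘_star g₂` with vertex sets of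
cardinality at least `2` recomposing `V`. -/
theorem too_many_edges_not_in_support
    (V : Finset α) (n : ℕ) (hn : V.card = n)
    (g : Finset (Sym2 α)) (hg : IsGraphOn V g)
    (hcard : Nat.choose (n - 1) 2 + 1 < g.card) :
    ∀ (V₁ V₂ : Finset α) (star : α), Disjoint V₁ V₂ → star ∈ V₁ →
      2 ≤ V₁.card → 2 ≤ V₂.card → V₁.erase star ∪ V₂ = V →
      ∀ g₁ g₂ : Finset (Sym2 α), IsGraphOn V₁ g₁ → IsGraphOn V₂ g₂ →
        g ∉ (ins V₂ star g₁ g₂).support :=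
  too_many_edges_not_in_support_general V n hn g hcard
end

section
/- Non-freeness relation in the graph insertion operad: let a, b, c, * be four distinct elements, and for distinct x, y let E{x,y} denote the simple graph on {x, y} with the single edge {x, y}. Then E{a,*} ∘_* E{b,c} + E{c,*} ∘_* E{a,b} − E{b,*} ∘_* E{a,c} = 2·P, where P is the simple graph on {a, b, c} with edge set {{a, b}, {b, c}}. (This nontrivial linear relation among insertions of generators shows that the operad of graphs with insertion is not free.) -/
/-!
Common framework: a simple graph on a finite vertex set `V ⊆ α` is a finite set of
unordered pairs (`Sym2 α`) of distinct elements of `V`.  The insertion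
`g₁ ∘_star g₂` is an element of the free `ℚ`-module `Finset (Sym2 α) →₀ ℚ`
on the set of edge sets.
-/

open scoped Classical

variable {α : Type*} [DecidableEq α]

/-!
In each generator `E{x,star}` the vertex `star` has the single neighbour `x`, so inserting an
edge `E{u,v}` gives the two graphs obtained by joining `x` to `u` or to `v`. Of the six graphs
produced by the three insertions, the edge sets `{ac, bc}` and `{ab, ac}` occur once with each
sign and cancel, while the path `{ab, bc}` occurs twice with a plus sign.
-/

lemma nbrs_singleton_self (x star : α) :
    nbrs ({s(x, star)} : Finset (Sym2 α)) star = {x} := by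
  ext w
  simp only [nbrs, Finset.mem_filter, Finset.mem_biUnion, Finset.mem_singleton, sym2Finset,
    Sym2.lift_mk, Finset.mem_insert, exists_eq_left, Sym2.eq_swap (a := star), Sym2.congr_left]
  exact and_iff_right_of_imp Or.inl

lemma delG_singleton_self (x star : α) :
    delG ({s(x, star)} : Finset (Sym2 α)) star = ∅ := by
  simp [delG]

lemma newEdges_singleton (x : α) (V₂ : Finset α) (f : ({x} : Finset α) → V₂) :
    newEdges {x} V₂ f = {s(x, (f default).1)} := by
  simp [newEdges, Finset.univ_unique]

lemma ins_eq_sum_of_nbrs_eq_singleton {V₂ : Finset α} {star x : α} {g₁ g₂ : Finset (Sym2 α)}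
    (h : nbrs g₁ star = {x}) :
    ins V₂ star g₁ g₂ = ∑ w ∈ V₂, Finsupp.single (delG g₁ star ∪ g₂ ∪ {s(x, w)}) 1 := by
  unfold ins
  generalize nbrs g₁ star = C at h ⊢
  subst h
  rw [← Finset.sum_coe_sort V₂, ← (Equiv.funUnique ({x} : Finset α) V₂).sum_comp]
  simp only [newEdges_singleton, Equiv.funUnique_apply]

lemma ins_edge_edge {x star u v : α} (huv : u ≠ v) :
    ins ({u, v} : Finset α) star ({s(x, star)} : Finset (Sym2 α)) {s(u, v)}
      = Finsupp.single ({s(u, v), s(x, u)} : Finset (Sym2 α)) 1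
        + Finsupp.single ({s(u, v), s(x, v)} : Finset (Sym2 α)) 1 := by
  rw [ins_eq_sum_of_nbrs_eq_singleton (nbrs_singleton_self x star), delG_singleton_self,
    Finset.sum_pair huv]
  rfl

theorem non_freeness_relation_general
    (a b c star : α)
    (hab : a ≠ b) (hac : a ≠ c) (hbc : b ≠ c) :
    ins ({b, c} : Finset α) star ({s(a, star)} : Finset (Sym2 α)) {s(b, c)}
      + ins ({a, b} : Finset α) star ({s(c, star)} : Finset (Sym2 α)) {s(a, b)}
      - ins ({a, c} : Finset α) star ({s(b, star)} : Finset (Sym2 α)) {s(a, c)}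
      = Finsupp.single ({s(a, b), s(b, c)} : Finset (Sym2 α)) 2 := by
  rw [ins_edge_edge hbc, ins_edge_edge hab, ins_edge_edge hac,
    Sym2.eq_swap (a := c), Sym2.eq_swap (a := c), Sym2.eq_swap (a := b) (b := a),
    Finset.pair_comm s(b, c) s(a, b), Finset.pair_comm s(a, c) s(a, b),
    Finset.pair_comm s(a, c) s(b, c), ← one_add_one_eq_two, Finsupp.single_add]
  abel

/-- **Non-freeness relation in the graph insertion operad**: for distinct `a, b, c, star`,
`E{a,star} ∘_star E{b,c} + E{c,star} ∘_star E{a,b} − E{b,star} ∘_star E{a,c} = 2·P`,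
where `P` is the path `a — b — c`. -/
theorem non_freeness_relation
    (a b c star : α)
    (hab : a ≠ b) (hac : a ≠ c) (hbc : b ≠ c)
    (has : a ≠ star) (hbs : b ≠ star) (hcs : c ≠ star) :
    ins ({b, c} : Finset α) star ({s(a, star)} : Finset (Sym2 α)) {s(b, c)}
      + ins ({a, b} : Finset α) star ({s(c, star)} : Finset (Sym2 α)) {s(a, b)}
      - ins ({a, c} : Finset α) star ({s(b, star)} : Finset (Sym2 α)) {s(a, c)}
      = Finsupp.single ({s(a, b), s(b, c)} : Finset (Sym2 α)) 2 :=
  non_freeness_relation_general a b c star hab hac hbc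
end

section
/- The second defining relation of the operad SP holds under graph insertion: let a, b, c, * be four distinct elements; for distinct x, y let E{x,y} denote the simple graph on {x, y} with the single edge {x, y} and let D{x,y} denote the edgeless graph on {x, y}. Then E{a,*} ∘_* D{b,c} = D{c,*} ∘_* E{a,b} + D{b,*} ∘_* E{a,c}, as elements of the free module on simple graphs on {a, b, c}. (This verifies one of the two quadratic relations in the presentation of the binary quadratic operad SP generated by the two-vertex edgeless graph and the two-vertex one-edge graph inside the graph insertion operad.) -/
/-!
Common framework: a simple graph on a finite vertex set `V ⊆ α` is a finite set of
unordered pairs (`Sym2 α`) of distinct elements of `V`.  The insertion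
`g₁ ∘_star g₂` is an element of the free `ℚ`-module `Finset (Sym2 α) →₀ ℚ`
on the set of edge sets.
-/

open scoped Classical

variable {α : Type*} [DecidableEq α]

/-! In `E{a,star}` the vertex `star` has the single neighbour `a`, so the left side reconnects `a`
to `b` or to `c`; in the edgeless graphs `star` has no neighbours, so each insertion on the right
is a single graph. Both sides are therefore `[{a,b}] + [{a,c}]`. -/

lemma nbrs_empty (x : α) : nbrs (∅ : Finset (Sym2 α)) x = ∅ := by
  simp [nbrs]

lemma nbrs_singleton_edge (a x : α) : nbrs {s(a, x)} x = {a} := by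
  ext v
  simp only [nbrs, Finset.mem_filter, Finset.mem_singleton, Sym2.eq_swap (a := x),
    Sym2.congr_left, and_iff_right_iff_imp]
  rintro rfl
  simp [sym2Finset]

lemma delG_empty (x : α) : delG (∅ : Finset (Sym2 α)) x = ∅ := rfl

lemma delG_singleton_edge (a x : α) : delG {s(a, x)} x = ∅ := by
  simp [delG]

lemma ins_of_nbrs_eq_empty {V₂ : Finset α} {x : α} {g₁ : Finset (Sym2 α)}
    (g₂ : Finset (Sym2 α)) (h : nbrs g₁ x = ∅) :
    ins V₂ x g₁ g₂ = Finsupp.single (delG g₁ x ∪ g₂) 1 := by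
  have : IsEmpty {v // v ∈ nbrs g₁ x} := by rw [h]; infer_instance
  simp [ins, newEdges, Finset.univ_eq_empty]

lemma ins_of_nbrs_eq_singleton {V₂ : Finset α} {x v : α} {g₁ : Finset (Sym2 α)}
    (g₂ : Finset (Sym2 α)) (h : nbrs g₁ x = {v}) :
    ins V₂ x g₁ g₂ = ∑ w ∈ V₂, Finsupp.single (delG g₁ x ∪ g₂ ∪ {s(v, w)}) 1 := by
  have : Unique {u // u ∈ nbrs g₁ x} := by rw [h]; infer_instance
  rw [ins, ← Finset.sum_coe_sort V₂]
  refine Fintype.sum_equiv (Equiv.funUnique _ _) _ _ fun f => ?_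
  have hv : ((default : {u // u ∈ nbrs g₁ x}) : α) = v :=
    Finset.mem_singleton.1 (h ▸ (default : {u // u ∈ nbrs g₁ x}).2)
  simp [newEdges, Finset.univ_unique, hv]

theorem sp_second_relation_general
    (a b c star : α)
    (hbc : b ≠ c) :
    ins ({b, c} : Finset α) star ({s(a, star)} : Finset (Sym2 α)) (∅ : Finset (Sym2 α))
      = ins ({a, b} : Finset α) star (∅ : Finset (Sym2 α)) ({s(a, b)} : Finset (Sym2 α))
        + ins ({a, c} : Finset α) star (∅ : Finset (Sym2 α))
            ({s(a, c)} : Finset (Sym2 α)) := by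
  rw [ins_of_nbrs_eq_singleton _ (nbrs_singleton_edge a star),
    ins_of_nbrs_eq_empty _ (nbrs_empty star), ins_of_nbrs_eq_empty _ (nbrs_empty star),
    Finset.sum_pair hbc, delG_singleton_edge, delG_empty]
  simp only [Finset.empty_union]

/-- **The second defining relation of the operad SP holds under graph insertion**: for
distinct `a, b, c, star`,
`E{a,star} ∘_star D{b,c} = D{c,star} ∘_star E{a,b} + D{b,star} ∘_star E{a,c}`. -/
theorem sp_second_relation
    (a b c star : α)
    (hab : a ≠ b) (hac : a ≠ c) (hbc : b ≠ c)
    (has : a ≠ star) (hbs : b ≠ star) (hcs : c ≠ star) :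
    ins ({b, c} : Finset α) star ({s(a, star)} : Finset (Sym2 α)) (∅ : Finset (Sym2 α))
      = ins ({a, b} : Finset α) star (∅ : Finset (Sym2 α)) ({s(a, b)} : Finset (Sym2 α))
        + ins ({a, c} : Finset α) star (∅ : Finset (Sym2 α))
            ({s(a, c)} : Finset (Sym2 α)) :=
  sp_second_relation_general a b c star hbc
end
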